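/- For a ∈ (0,1] and τ ≥ 0, with ω = e^{-πi/4}, the function G(τ) := e^{-2πaωτ} sinh(2πaωτ)/sinh(πωτ) (with G(0) := 2a by continuity) satisfies |G(τ)| ≤ G(0) = 2a for all τ ≥ 0. -/

import Mathlib

noncomputable def omg : ℂ := Complex.exp (-(Real.pi : ℂ) * Complex.I / 4)

/-- `G(τ) = e^{-2πaωτ} sinh(2πaωτ)/sinh(πωτ)` with `G(0) := 2a` (its limit). -/
noncomputable def Gfun (a : ℝ) (τ : ℝ) : ℂ :=
  if τ = 0 then (2 * a : ℝ)
  else Complex.exp (-2 * (Real.pi : ℂ) * (a : ℂ) * omg * (τ : ℂ)) *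
    Complex.sinh (2 * (Real.pi : ℂ) * (a : ℂ) * omg * (τ : ℂ)) /
      Complex.sinh ((Real.pi : ℂ) * omg * (τ : ℂ))

/-!
With `w = πωτ` one has `e^{-2aw} sinh(2aw) = (1 - e^{-4aw}) / 2`. As `Re w ≥ 0`, the mean value
inequality for `e^{-z}` on the right half-plane gives `|1 - e^{-4aw}| ≤ 4a|w|`. As `w` lies on the
diagonal `|Im w| = Re w`, the identity `|sinh w|² = sinh² (Re w) + sin² (Im w)` and the Taylor
bounds `sinh² x ≥ x² + x⁴/3`, `sin² y ≥ y² - y⁴/3` give `|sinh w| ≥ |w|`.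
-/

namespace Real

theorem one_add_sq_div_two_add_pow_four_div_le_cosh (x : ℝ) :
    1 + x ^ 2 / 2 + x ^ 4 / 24 ≤ cosh x := by
  have h := sum_le_hasSum (Finset.range 3)
    (fun n _ => div_nonneg (by rw [pow_mul]; positivity) (by positivity)) (hasSum_cosh x)
  norm_num [Finset.sum_range_succ, Nat.factorial] at h
  linarith

theorem sq_add_pow_four_div_three_le_sinh_sq (x : ℝ) : x ^ 2 + x ^ 4 / 3 ≤ sinh x ^ 2 := by
  have h := one_add_sq_div_two_add_pow_four_div_le_cosh (2 * x)
  rw [cosh_two_mul, cosh_sq] at h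
  linarith

theorem sq_sub_pow_four_div_three_le_sin_sq (y : ℝ) : y ^ 2 - y ^ 4 / 3 ≤ sin y ^ 2 := by
  have h₁ : |y| - |sin y| ≤ |y| ^ 3 / 6 := (abs_sub_abs_le_abs_sub _ _).trans (abs_sub_sin_le y)
  have h₂ : |y| + |sin y| ≤ 2 * |y| := by linarith [abs_sin_le_abs (x := y)]
  have h₃ : y ^ 2 - sin y ^ 2 = (|y| - |sin y|) * (|y| + |sin y|) := by
    rw [← sq_abs y, ← sq_abs (sin y)]; ring
  have h₄ : (|y| - |sin y|) * (|y| + |sin y|) ≤ |y| ^ 3 / 6 * (2 * |y|) :=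
    mul_le_mul h₁ h₂ (by positivity) (by positivity)
  have h₅ : |y| ^ 4 = y ^ 4 := (by decide : Even 4).pow_abs y
  nlinarith

end Real

namespace Complex

theorem norm_sinh_sq (z : ℂ) : ‖sinh z‖ ^ 2 = Real.sinh z.re ^ 2 + Real.sin z.im ^ 2 := by
  conv_lhs => rw [← re_add_im z]
  rw [sinh_add, sinh_mul_I, cosh_mul_I, ← ofReal_sinh, ← ofReal_cosh, ← ofReal_sin, ← ofReal_cos,
    ← normSq_eq_norm_sq, normSq_apply]
  simp only [add_re, add_im, mul_re, mul_im, ofReal_re, ofReal_im, I_re, I_im]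
  nlinarith [Real.sin_sq_add_cos_sq z.im, Real.cosh_sq z.re]

theorem norm_le_norm_sinh {z : ℂ} (h : |z.im| ≤ |z.re|) : ‖z‖ ≤ ‖sinh z‖ := by
  have him : z.im ^ 4 ≤ z.re ^ 4 := by
    simpa only [(by decide : Even 4).pow_abs] using pow_le_pow_left₀ (abs_nonneg _) h 4
  rw [← pow_le_pow_iff_left₀ (norm_nonneg _) (norm_nonneg _) two_ne_zero, norm_sinh_sq,
    Complex.sq_norm, normSq_apply]
  nlinarith [Real.sq_add_pow_four_div_three_le_sinh_sq z.re,
    Real.sq_sub_pow_four_div_three_le_sin_sq z.im]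

theorem norm_one_sub_exp_neg_le {z : ℂ} (hz : 0 ≤ z.re) : ‖1 - exp (-z)‖ ≤ ‖z‖ := by
  have hderiv : ∀ w ∈ {w : ℂ | 0 ≤ w.re},
      HasDerivWithinAt (fun w => exp (-w)) (-exp (-w)) {w : ℂ | 0 ≤ w.re} w := fun w _ => by
    simpa using ((hasDerivAt_id w).neg.cexp).hasDerivWithinAt
  have hbound : ∀ w ∈ {w : ℂ | 0 ≤ w.re}, ‖-exp (-w)‖ ≤ 1 := fun w hw => by
    rw [norm_neg, norm_exp, neg_re, Real.exp_le_one_iff, neg_nonpos]; exact hw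
  simpa [norm_sub_rev] using
    (convex_halfSpace_re_ge 0).norm_image_sub_le_of_norm_hasDerivWithin_le hderiv hbound
      (show (0 : ℂ) ∈ {w : ℂ | 0 ≤ w.re} by simp) hz

theorem exp_neg_mul_sinh (z : ℂ) : exp (-z) * sinh z = (1 - exp (-(2 * z))) / 2 := by
  rw [sinh, mul_div_assoc', mul_sub, ← exp_add, ← exp_add, neg_add_cancel, exp_zero, ← neg_add,
    ← two_mul]

theorem norm_exp_neg_mul_sinh_mul_div_sinh_le {c : ℝ} (hc : 0 ≤ c) {w : ℂ} (hw : |w.im| ≤ w.re) :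
    ‖exp (-(c * w)) * sinh (c * w) / sinh w‖ ≤ c := by
  have hnum : ‖1 - exp (-(2 * (c * w)))‖ ≤ 2 * c * ‖w‖ := by
    refine (norm_one_sub_exp_neg_le ?_).trans_eq ?_
    · simpa using mul_nonneg hc ((abs_nonneg _).trans hw)
    · simp [abs_of_nonneg hc, mul_assoc]
  have hden : ‖w‖ ≤ ‖sinh w‖ := norm_le_norm_sinh (hw.trans (le_abs_self _))
  rw [exp_neg_mul_sinh, div_div, norm_div]
  refine div_le_of_le_mul₀ (norm_nonneg _) hc (hnum.trans ?_)
  rw [norm_mul, RCLike.norm_two]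
  nlinarith

end Complex

theorem omg_re : omg.re = √2 / 2 := by
  simp [omg, Complex.exp_re, neg_div]

theorem omg_im : omg.im = -(√2 / 2) := by
  simp [omg, Complex.exp_im, neg_div]

theorem abs_im_le_re_pi_mul_omg_mul {τ : ℝ} (hτ : 0 ≤ τ) :
    |((Real.pi : ℂ) * omg * τ).im| ≤ ((Real.pi : ℂ) * omg * τ).re := by
  simp [omg_re, omg_im, abs_mul, abs_of_nonneg hτ, abs_of_pos Real.pi_pos,
    abs_of_nonneg (by positivity : (0 : ℝ) ≤ √2 / 2)]

theorem Gfun_bound_general (a : ℝ) (ha0 : 0 < a) :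
    Gfun a 0 = (2 * a : ℝ) ∧ ∀ τ : ℝ, 0 ≤ τ → ‖Gfun a τ‖ ≤ 2 * a := by
  refine ⟨by simp [Gfun], fun τ hτ => ?_⟩
  unfold Gfun
  split_ifs
  · simp [abs_of_pos ha0]
  · convert Complex.norm_exp_neg_mul_sinh_mul_div_sinh_le (c := 2 * a) (by positivity)
      (abs_im_le_re_pi_mul_omg_mul hτ) using 5 <;> push_cast <;> ring

/-- For `a ∈ (0,1]` and `τ ≥ 0`, `|G(τ)| ≤ G(0) = 2a`. -/
theorem Gfun_bound (a : ℝ) (ha0 : 0 < a) (ha1 : a ≤ 1) :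
    Gfun a 0 = (2 * a : ℝ) ∧ ∀ τ : ℝ, 0 ≤ τ → ‖Gfun a τ‖ ≤ 2 * a :=
  Gfun_bound_general a ha0
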